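/- Let F = {0 (constant), 1 (constant), f (arity 3), g (arity 2)} and let R be the rewrite system {f(0,1,x) → f(x,x,x), g(x,y) → x, g(x,y) → y}. Then every ground term of T(F) innermost terminates, i.e., there is no infinite sequence of innermost rewrite steps starting from any ground term. -/

import Mathlib

/-!
Order terms lexicographically by (number of `g`-nodes with two arguments, number of nodes
`f(0, 1, _)`). A `g`-step deletes a `g`-node and creates none. An innermost `f`-step rewrites
`f(0, 1, x)` with `x` in normal form, so `x` contains neither kind of node: copying it creates none,
and `f(x, x, x)` is not of the form `f(0, 1, _)`, so the second count drops while the first stays.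
Both counts are sums of node weights that depend only on the node's symbol and the symbols and
arities of its arguments. So outside the rewritten subterm only its parent's weight can change, and
it does not for the `g`-count (which only sees arities) nor in an `f`-step (which keeps the root
symbol and arity).
-/

namespace TRS

inductive Term (F V : Type*) where
  | var : V → Term F V
  | app : F → List (Term F V) → Term F V

namespace Term

variable {F V : Type*}

mutual
  def subst (σ : V → Term F V) : Term F V → Term F V
    | .var x => σ x
    | .app f ts => .app f (substList σ ts)

  def substList (σ : V → Term F V) : List (Term F V) → List (Term F V)
    | [] => []
    | t :: ts => subst σ t :: substList σ ts
end

mutual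
  def vars : Term F V → Set V
    | .var x => {x}
    | .app _ ts => varsList ts

  def varsList : List (Term F V) → Set V
    | [] => ∅
    | t :: ts => vars t ∪ varsList ts
end

def IsGround (t : Term F V) : Prop := vars t = ∅

def top : Term F V → Option F
  | .var _ => none
  | .app f _ => some f

def subtermAt : List ℕ → Term F V → Option (Term F V)
  | [], t => some t
  | _ :: _, .var _ => none
  | i :: p, .app _ ts =>
    match ts[i]? with
    | none => none
    | some u => subtermAt p u

def replaceAt : List ℕ → Term F V → Term F V → Option (Term F V)
  | [], _, u => some u
  | _ :: _, .var _, _ => none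
  | i :: p, .app f ts, u =>
    match ts[i]? with
    | none => none
    | some ti =>
      match replaceAt p ti u with
      | none => none
      | some ti' => some (.app f (ts.set i ti'))

inductive WF (arity : F → ℕ) : Term F V → Prop
  | var (x : V) : WF arity (.var x)
  | app (f : F) (ts : List (Term F V)) :
      ts.length = arity f → (∀ t ∈ ts, WF arity t) → WF arity (.app f ts)

inductive Occurs (f : F) : Term F V → Prop
  | head (ts : List (Term F V)) : Occurs f (.app f ts)
  | arg {g : F} {ts : List (Term F V)} {t : Term F V} :
      t ∈ ts → Occurs f t → Occurs f (.app g ts)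

end Term

open Term

structure Rule (F V : Type*) where
  lhs : Term F V
  rhs : Term F V

variable {F V : Type*}

/-- The domain of a substitution. -/
def SDom (σ : V → Term F V) : Set V := {x | σ x ≠ Term.var x}

/-- The range (variables) of a substitution. -/
def SRan (σ : V → Term F V) : Set V := ⋃ x ∈ SDom σ, vars (σ x)

/-- A ground substitution maps every variable of its domain to a ground term. -/
def GroundSubst (σ : V → Term F V) : Prop := ∀ x ∈ SDom σ, IsGround (σ x)

/-- `R` is a rewrite system: no left-hand side is a variable, and
`Var(rhs) ⊆ Var(lhs)` for every rule. -/
def IsRS (R : List (Rule F V)) : Prop :=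
  ∀ ρ ∈ R, (∀ x : V, ρ.lhs ≠ Term.var x) ∧ vars ρ.rhs ⊆ vars ρ.lhs

/-- Rewriting at position `p` with the rule `l → r`. -/
def RewriteAtWith (l r : Term F V) (p : List ℕ) (s t : Term F V) : Prop :=
  ∃ τ : V → Term F V, subtermAt p s = some (subst τ l) ∧ replaceAt p s (subst τ r) = some t

/-- Rewriting at position `p` with some rule of `R`. -/
def RewriteAt (R : List (Rule F V)) (p : List ℕ) (s t : Term F V) : Prop :=
  ∃ ρ ∈ R, RewriteAtWith ρ.lhs ρ.rhs p s t

/-- The rewriting relation induced by `R`. -/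
def Rewrite (R : List (Rule F V)) (s t : Term F V) : Prop :=
  ∃ p, RewriteAt R p s t

def ReducibleAt (R : List (Rule F V)) (s : Term F V) (p : List ℕ) : Prop :=
  ∃ t, RewriteAt R p s t

def Reducible (R : List (Rule F V)) (s : Term F V) : Prop :=
  ∃ t, Rewrite R s t

def NormalForm (R : List (Rule F V)) (s : Term F V) : Prop := ¬ Reducible R s

/-- `n` is a normal form of `s`. -/
def IsNormalFormOf (R : List (Rule F V)) (s n : Term F V) : Prop :=
  Relation.ReflTransGen (Rewrite R) s n ∧ NormalForm R n

/-- `q` is strictly below `p` (`p` is a strict prefix of `q`). -/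
def StrictBelow (p q : List ℕ) : Prop := p <+: q ∧ p ≠ q

/-- Innermost rewrite step at position `p`. -/
def InnAt (R : List (Rule F V)) (p : List ℕ) (s t : Term F V) : Prop :=
  RewriteAt R p s t ∧ ∀ q, StrictBelow p q → ¬ ReducibleAt R s q

def InnStep (R : List (Rule F V)) (s t : Term F V) : Prop := ∃ p, InnAt R p s t

/-- Outermost rewrite step at position `p`. -/
def OutAt (R : List (Rule F V)) (p : List ℕ) (s t : Term F V) : Prop :=
  RewriteAt R p s t ∧ ∀ q, StrictBelow q p → ¬ ReducibleAt R s q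

def OutStep (R : List (Rule F V)) (s t : Term F V) : Prop := ∃ p, OutAt R p s t

/-- Innermost rewrite step at position `p` with rule `l → r`. -/
def InnAtWith (R : List (Rule F V)) (l r : Term F V) (p : List ℕ) (s t : Term F V) : Prop :=
  RewriteAtWith l r p s t ∧ ∀ q, StrictBelow p q → ¬ ReducibleAt R s q

/-- Outermost rewrite step at position `p` with rule `l → r`. -/
def OutAtWith (R : List (Rule F V)) (l r : Term F V) (p : List ℕ) (s t : Term F V) : Prop :=
  RewriteAtWith l r p s t ∧ ∀ q, StrictBelow q p → ¬ ReducibleAt R s q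

/-- No infinite innermost derivation starts from `t`. -/
def InnTerminates (R : List (Rule F V)) (t : Term F V) : Prop :=
  ¬ ∃ f : ℕ → Term F V, f 0 = t ∧ ∀ n, InnStep R (f n) (f (n + 1))

/-- No infinite outermost derivation starts from `t`. -/
def OutTerminates (R : List (Rule F V)) (t : Term F V) : Prop :=
  ¬ ∃ f : ℕ → Term F V, f 0 = t ∧ ∀ n, OutStep R (f n) (f (n + 1))

def Unifies (σ : V → Term F V) (u v : Term F V) : Prop := subst σ u = subst σ v

/-- `σ` is a most general unifier of `u` and `v`. -/
def IsMGU (u v : Term F V) (σ : V → Term F V) : Prop :=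
  Unifies σ u v ∧
    ∀ τ : V → Term F V, Unifies τ u v → ∃ ρ : V → Term F V, ∀ x, subst ρ (σ x) = τ x

/-- The usable rules of a term (least set closed under the defining equations). -/
inductive Usable (R : List (Rule F V)) (XA : Set V) : Term F V → Rule F V → Prop
  | var {x : V} {ρ : Rule F V} : x ∉ XA → ρ ∈ R → Usable R XA (Term.var x) ρ
  | rls {f : F} {ts : List (Term F V)} {ρ : Rule F V} :
      ρ ∈ R → Term.top ρ.lhs = some f → Usable R XA (Term.app f ts) ρ
  | arg {f : F} {ts : List (Term F V)} {t : Term F V} {ρ : Rule F V} :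
      t ∈ ts → Usable R XA t ρ → Usable R XA (Term.app f ts) ρ
  | rhs {f : F} {ts : List (Term F V)} {ρ' ρ : Rule F V} :
      ρ' ∈ R → Term.top ρ'.lhs = some f → Usable R XA ρ'.rhs ρ → Usable R XA (Term.app f ts) ρ

/-- The signature F = {0, 1, f:3, g:2}. -/
inductive F15 : Type
  | zero | one | f | g

def arity15 : F15 → ℕ
  | .zero => 0
  | .one => 0
  | .f => 3
  | .g => 2

/-- Toyama's system: f(0,1,x) → f(x,x,x), g(x,y) → x, g(x,y) → y. -/
def R15 : List (Rule F15 ℕ) :=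
  [ ⟨.app .f [.app .zero [], .app .one [], .var 0], .app .f [.var 0, .var 0, .var 0]⟩,
    ⟨.app .g [.var 0, .var 1], .var 0⟩,
    ⟨.app .g [.var 0, .var 1], .var 1⟩ ]

theorem List.set_eq_self_of_getElem?_eq {α : Type*} {l : List α} {i : ℕ} {a : α}
    (h : l[i]? = some a) : l.set i a = l := by
  obtain ⟨hi, rfl⟩ := List.getElem?_eq_some_iff.mp h
  exact List.set_getElem_self hi

namespace Term

variable {F V : Type*}

def shape : Term F V → Option (F × ℕ)
  | .var _ => none
  | .app f ts => some (f, ts.length)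

@[simp]
theorem shape_app (f : F) (ts : List (Term F V)) : shape (.app f ts) = some (f, ts.length) :=
  rfl

theorem eq_app_nil_of_shape_eq {t : Term F V} {f : F} (h : shape t = some (f, 0)) :
    t = .app f [] := by
  cases t with
  | var x => cases h
  | app g ts =>
    simp only [shape, Option.some.injEq, Prod.mk.injEq, List.length_eq_zero_iff] at h
    obtain ⟨rfl, rfl⟩ := h
    rfl

mutual
  def weight (c : F → List (Option (F × ℕ)) → ℕ) : Term F V → ℕ
    | .var _ => 0
    | .app f ts => c f (ts.map shape) + weightList c ts

  def weightList (c : F → List (Option (F × ℕ)) → ℕ) : List (Term F V) → ℕ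
    | [] => 0
    | t :: ts => weight c t + weightList c ts
end

section Weight

variable (c : F → List (Option (F × ℕ)) → ℕ)

theorem weightList_set {ts : List (Term F V)} {i : ℕ} {u : Term F V} (hi : ts[i]? = some u)
    (u' : Term F V) : weightList c (ts.set i u') + weight c u = weightList c ts + weight c u' := by
  induction ts generalizing i with
  | nil => simp at hi
  | cons a ts ih =>
    cases i with
    | zero =>
      obtain rfl : a = u := by simpa using hi
      simp only [List.set_cons_zero, weightList]
      omega
    | succ i =>
      have := ih (by simpa using hi)
      simp only [List.set_cons_succ, weightList]
      omega

theorem shape_eq_of_replaceAt_cons {i : ℕ} {p : List ℕ} {s u t : Term F V}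
    (h : replaceAt (i :: p) s u = some t) : shape t = shape s := by
  cases s with
  | var x => simp [replaceAt] at h
  | app f ts =>
    simp only [replaceAt] at h
    split at h
    · simp at h
    · split at h
      · simp at h
      · cases h
        simp [shape]

theorem weight_replaceAt {p : List ℕ} {s u u' t : Term F V}
    (hc : ∀ f ks i, ks[i]? = some (shape u) → c f (ks.set i (shape u')) = c f ks)
    (hs : subtermAt p s = some u) (ht : replaceAt p s u' = some t) :
    weight c t + weight c u = weight c s + weight c u' := by
  induction p generalizing s t with
  | nil =>
    cases hs; cases ht
    omega
  | cons i p ih =>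
    cases s with
    | var x => simp [subtermAt] at hs
    | app f ts =>
      simp only [subtermAt] at hs
      simp only [replaceAt] at ht
      cases hti : ts[i]? with
      | none => simp [hti] at hs
      | some ti =>
        simp only [hti] at hs ht
        cases hti' : replaceAt p ti u' with
        | none => simp [hti'] at ht
        | some ti' =>
          simp only [hti', Option.some.injEq] at ht
          subst ht
          have hparent : c f ((ts.set i ti').map shape) = c f (ts.map shape) := by
            rw [List.map_set]
            cases p with
            | nil =>
              cases hs; cases hti'
              exact hc f _ i (by simp [hti])
            | cons j p =>
              rw [shape_eq_of_replaceAt_cons hti',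
                List.set_eq_self_of_getElem?_eq (by simp [hti])]
          have := ih hs hti'
          have := weightList_set c hti ti'
          simp only [weight, hparent]
          omega

theorem weight_replaceAt_of_shape_eq {p : List ℕ} {s u u' t : Term F V}
    (hs : subtermAt p s = some u) (ht : replaceAt p s u' = some t) (hshape : shape u' = shape u) :
    weight c t + weight c u = weight c s + weight c u' :=
  weight_replaceAt c (fun f _ _ hi => by rw [hshape, List.set_eq_self_of_getElem?_eq hi]) hs ht

mutual
  theorem exists_subtermAt_of_weight_ne_zero :
      ∀ s : Term F V, weight c s ≠ 0 →
        ∃ q f ts, subtermAt q s = some (.app f ts) ∧ c f (ts.map shape) ≠ 0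
    | .var _, h => absurd rfl h
    | .app f ts, h => by
      by_cases hroot : c f (ts.map shape) = 0
      · obtain ⟨i, q, g, us, t, hi, hq, hc⟩ := exists_subtermAt_of_weightList_ne_zero ts
          (by simpa [weight, hroot] using h)
        exact ⟨i :: q, g, us, by simp only [subtermAt, hi, hq], hc⟩
      · exact ⟨[], f, ts, rfl, hroot⟩

  theorem exists_subtermAt_of_weightList_ne_zero :
      ∀ ts : List (Term F V), weightList c ts ≠ 0 →
        ∃ (i : ℕ) (q : List ℕ) (f : F) (us : List (Term F V)) (t : Term F V),
          ts[i]? = some t ∧ subtermAt q t = some (.app f us) ∧ c f (us.map shape) ≠ 0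
    | [], h => absurd rfl h
    | t :: ts, h => by
      by_cases ht : weight c t = 0
      · obtain ⟨i, q, f, us, u, hi, hq, hc⟩ := exists_subtermAt_of_weightList_ne_zero ts
          (by simpa [weightList, ht] using h)
        exact ⟨i + 1, q, f, us, u, by simpa using hi, hq, hc⟩
      · obtain ⟨q, f, us, hq, hc⟩ := exists_subtermAt_of_weight_ne_zero t ht
        exact ⟨0, q, f, us, t, rfl, hq, hc⟩
end

end Weight

theorem subtermAt_append (p q : List ℕ) (s : Term F V) :
    subtermAt (p ++ q) s = (subtermAt p s).bind (subtermAt q) := by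
  induction p generalizing s with
  | nil => rfl
  | cons i p ih =>
    cases s with
    | var x => rfl
    | app f ts =>
      simp only [List.cons_append, subtermAt]
      split <;> simp_all

theorem exists_replaceAt {p : List ℕ} {s u : Term F V} (hs : subtermAt p s = some u)
    (u' : Term F V) : ∃ t, replaceAt p s u' = some t := by
  induction p generalizing s with
  | nil => exact ⟨u', rfl⟩
  | cons i p ih =>
    cases s with
    | var x => simp [subtermAt] at hs
    | app f ts =>
      simp only [subtermAt] at hs
      cases hti : ts[i]? with
      | none => simp [hti] at hs
      | some ti =>
        simp only [hti] at hs
        obtain ⟨ti', hti'⟩ := ih hs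
        exact ⟨.app f (ts.set i ti'), by simp only [replaceAt, hti, hti']⟩

end Term

open Term

section Reducibility

variable {R : List (Rule F V)}

theorem reducibleAt_nil_subst {ρ : Rule F V} (hρ : ρ ∈ R) (τ : V → Term F V) :
    ReducibleAt R (subst τ ρ.lhs) [] :=
  ⟨subst τ ρ.rhs, ρ, hρ, τ, rfl, rfl⟩

theorem ReducibleAt.of_subtermAt {p q : List ℕ} {s u : Term F V}
    (hs : subtermAt p s = some u) (h : ReducibleAt R u q) : ReducibleAt R s (p ++ q) := by
  obtain ⟨-, ρ, hρ, τ, hq, -⟩ := h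
  have hpq : subtermAt (p ++ q) s = some (subst τ ρ.lhs) := by
    rw [subtermAt_append, hs]
    exact hq
  obtain ⟨t, ht⟩ := exists_replaceAt hpq (subst τ ρ.rhs)
  exact ⟨t, ρ, hρ, τ, hpq, ht⟩

theorem not_reducibleAt_below {p q : List ℕ} {s u : Term F V}
    (hinn : ∀ q, StrictBelow p q → ¬ ReducibleAt R s q) (hs : subtermAt p s = some u)
    (hq : q ≠ []) : ¬ ReducibleAt R u q :=
  fun h => hinn (p ++ q) ⟨List.prefix_append p q, by simpa using hq.symm⟩
    (h.of_subtermAt hs)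

theorem weight_eq_zero_of_irreducible {c : F → List (Option (F × ℕ)) → ℕ}
    (hc : ∀ f ts, c f (ts.map shape) ≠ 0 → ReducibleAt R (.app f ts) []) {s : Term F V}
    (hs : ∀ q, ¬ ReducibleAt R s q) : weight c s = 0 := by
  by_contra h
  obtain ⟨q, f, ts, hq, hne⟩ := exists_subtermAt_of_weight_ne_zero c s h
  simpa using hs (q ++ []) ((hc f ts hne).of_subtermAt hq)

theorem innTerminates_of_lt {α : Type*} [Preorder α] [WellFoundedLT α] (μ : Term F V → α)
    (h : ∀ s t, InnStep R s t → μ t < μ s) (t : Term F V) : InnTerminates R t := by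
  rintro ⟨seq, -, hseq⟩
  obtain ⟨n, hn⟩ := WellFounded.not_rel_apply_succ (r := (· < ·)) (μ ∘ seq)
  exact hn (h _ _ (hseq n))

end Reducibility

section Toyama

def gNode : F15 → List (Option (F15 × ℕ)) → ℕ
  | .g, ks => if ks.length = 2 then 1 else 0
  | _, _ => 0

def fNode : F15 → List (Option (F15 × ℕ)) → ℕ
  | .f, [some (.zero, 0), some (.one, 0), _] => 1
  | _, _ => 0

theorem gNode_set (sym : F15) (ks : List (Option (F15 × ℕ))) (i : ℕ)
    (k : Option (F15 × ℕ)) :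
    gNode sym (ks.set i k) = gNode sym ks := by
  cases sym <;> simp [gNode]

theorem eq_g_of_gNode_ne_zero {sym : F15} {ks : List (Option (F15 × ℕ))}
    (h : gNode sym ks ≠ 0) : sym = .g ∧ ks.length = 2 := by
  cases sym <;> simp_all [gNode]

theorem eq_f_of_fNode_ne_zero {sym : F15} {ks : List (Option (F15 × ℕ))}
    (h : fNode sym ks ≠ 0) : sym = .f ∧ ∃ k, ks = [some (.zero, 0), some (.one, 0), k] := by
  unfold fNode at h
  split at h
  · exact ⟨rfl, _, rfl⟩
  · exact absurd rfl h

theorem reducibleAt_of_gNode_ne_zero {sym : F15} {ts : List (Term F15 ℕ)}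
    (h : gNode sym (ts.map shape) ≠ 0) : ReducibleAt R15 (.app sym ts) [] := by
  obtain ⟨rfl, hlen⟩ := eq_g_of_gNode_ne_zero h
  obtain ⟨a, b, rfl⟩ := List.length_eq_two.mp (by simpa using hlen)
  exact reducibleAt_nil_subst (ρ := R15[1]) (by simp [R15]) (fun n => if n = 0 then a else b)

theorem reducibleAt_of_fNode_ne_zero {sym : F15} {ts : List (Term F15 ℕ)}
    (h : fNode sym (ts.map shape) ≠ 0) : ReducibleAt R15 (.app sym ts) [] := by
  obtain ⟨rfl, k, hk⟩ := eq_f_of_fNode_ne_zero h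
  obtain ⟨a, b, x, rfl⟩ : ∃ a b x, ts = [a, b, x] := by
    rcases ts with _ | ⟨a, _ | ⟨b, _ | ⟨x, _ | _⟩⟩⟩ <;> simp at hk ⊢
  simp only [List.map_cons, List.map_nil, List.cons.injEq] at hk
  rw [eq_app_nil_of_shape_eq hk.1, eq_app_nil_of_shape_eq hk.2.1]
  exact reducibleAt_nil_subst (ρ := R15[0]) (by simp [R15]) (fun _ => x)

theorem fNode_f_self (k k' : Option (F15 × ℕ)) : fNode .f [k, k, k'] = 0 := by
  rcases k with _ | ⟨_ | _ | _ | _, _ | _⟩ <;> rfl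

theorem weight_gNode_lt_of_g_step {p : List ℕ} {s t a b u : Term F15 ℕ}
    (hs : subtermAt p s = some (.app .g [a, b])) (ht : replaceAt p s u = some t)
    (hu : u = a ∨ u = b) : weight gNode t < weight gNode s := by
  have h := weight_replaceAt gNode (fun sym ks i _ => gNode_set sym ks i _) hs ht
  simp only [weight, weightList, gNode, List.length_map, List.length_cons, List.length_nil,
    reduceIte] at h
  rcases hu with rfl | rfl <;> omega

theorem weight_lt_of_innermost_f_step {p : List ℕ} {s t x : Term F15 ℕ}
    (hinn : ∀ q, StrictBelow p q → ¬ ReducibleAt R15 s q)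
    (hs : subtermAt p s = some (.app .f [.app .zero [], .app .one [], x]))
    (ht : replaceAt p s (.app .f [x, x, x]) = some t) :
    weight gNode t = weight gNode s ∧ weight fNode t < weight fNode s := by
  have hx : ∀ q, ¬ ReducibleAt R15 x q := fun q h =>
    not_reducibleAt_below hinn hs (List.cons_ne_nil 2 q) (h.of_subtermAt (p := [2]) rfl)
  have hgx := weight_eq_zero_of_irreducible (c := gNode)
    (fun _ _ => reducibleAt_of_gNode_ne_zero) hx
  have hfx := weight_eq_zero_of_irreducible (c := fNode)
    (fun _ _ => reducibleAt_of_fNode_ne_zero) hx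
  have hg := weight_replaceAt gNode (fun sym ks i _ => gNode_set sym ks i _) hs ht
  have hf := weight_replaceAt_of_shape_eq fNode hs ht rfl
  simp only [weight, weightList, List.map_cons, List.map_nil, shape_app, List.length_nil,
    fNode_f_self] at hg hf
  simp only [gNode, fNode] at hg hf
  omega

def toyamaMeasure (t : Term F15 ℕ) : ℕ ×ₗ ℕ := toLex (weight gNode t, weight fNode t)

theorem toyamaMeasure_lt_of_innStep {s t : Term F15 ℕ} (h : InnStep R15 s t) :
    toyamaMeasure t < toyamaMeasure s := by
  obtain ⟨p, ⟨ρ, hρ, τ, hs, ht⟩, hinn⟩ := h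
  simp only [R15, List.mem_cons, List.not_mem_nil, or_false] at hρ
  rw [toyamaMeasure, toyamaMeasure, Prod.Lex.toLex_lt_toLex]
  rcases hρ with rfl | rfl | rfl
  · exact Or.inr (weight_lt_of_innermost_f_step hinn hs ht)
  · exact Or.inl (weight_gNode_lt_of_g_step hs ht (.inl rfl))
  · exact Or.inl (weight_gNode_lt_of_g_step hs ht (.inr rfl))

end Toyama

/-- every ground term of T(F) innermost terminates for Toyama's system. -/
theorem toyama_innermost_terminating :
    ∀ t : Term F15 ℕ, IsGround t → Term.WF arity15 t → InnTerminates R15 t :=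
  fun t _ _ => innTerminates_of_lt toyamaMeasure (fun _ _ => toyamaMeasure_lt_of_innStep) t

end TRS
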